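/- If s, t ∈ ℂ∖[0,∞) satisfy W(s) = W(t), then there exists an integer k such that s = t·e^{2ikβ} or s·t = e^{2ikβ}. -/

import Mathlib

/-- The lifted gluing function
`W(s) = −(1/2)(exp((π/β)·Log(−s)) + exp(−(π/β)·Log(−s)))`. -/
noncomputable def Wfun (β : ℝ) (s : ℂ) : ℂ :=
  -(1 / 2) * (Complex.exp (((Real.pi / β : ℝ) : ℂ) * Complex.log (-s)) +
    Complex.exp (-((Real.pi / β : ℝ) : ℂ) * Complex.log (-s)))

/-!
Writing `W(s) = -(a + a⁻¹)/2` with `a = exp((π/β) Log(-s))`, the equation `W(s) = W(t)`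
factors as `(a - b)(ab - 1) = 0`. Hence `exp((π/β)(Log(-s) ∓ Log(-t))) = 1`, so
`Log(-s) ∓ Log(-t) ∈ 2βiℤ`, and exponentiating gives `s/t` or `st` in `e^{2iβℤ}`.
-/

open Complex

theorem eq_or_mul_eq_one_of_add_inv_eq {K : Type*} [Field K] {a b : K} (ha : a ≠ 0) (hb : b ≠ 0)
    (h : a + a⁻¹ = b + b⁻¹) : a = b ∨ a * b = 1 := by
  have hfactor : (a - b) * (a * b - 1) = 0 := by
    field_simp at h
    linear_combination h
  rcases mul_eq_zero.mp hfactor with h | h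
  · exact Or.inl (sub_eq_zero.mp h)
  · exact Or.inr (sub_eq_zero.mp h)

theorem Real.arccos_neg_div_sqrt_pos {p q : ℝ} (h : 0 < p - q ^ 2) :
    0 < Real.arccos (-q / Real.sqrt p) := by
  have hq : |q| < Real.sqrt p := by
    rw [← Real.sqrt_sq_eq_abs]
    exact Real.sqrt_lt_sqrt (sq_nonneg _) (by linarith)
  rw [Real.arccos_pos, div_lt_one ((abs_nonneg q).trans_lt hq)]
  exact (neg_le_abs q).trans_lt hq

theorem Wfun_eq_add_inv (β : ℝ) (s : ℂ) :
    Wfun β s = -(1 / 2) * (exp (((Real.pi / β : ℝ) : ℂ) * log (-s)) +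
      (exp (((Real.pi / β : ℝ) : ℂ) * log (-s)))⁻¹) := by
  rw [Wfun, neg_mul ((Real.pi / β : ℝ) : ℂ), exp_neg]

theorem exists_int_eq_of_exp_pi_div_mul_eq_one {β : ℝ} (hβ : β ≠ 0) {z : ℂ}
    (h : exp (((Real.pi / β : ℝ) : ℂ) * z) = 1) : ∃ k : ℤ, z = 2 * k * β * I := by
  obtain ⟨k, hk⟩ := exp_eq_one_iff.mp h
  refine ⟨k, ?_⟩
  have hβ' : (β : ℂ) ≠ 0 := ofReal_ne_zero.mpr hβ
  push_cast at hk
  field_simp at hk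
  linear_combination hk

theorem ne_zero_of_not_im_eq_zero_and_re_nonneg {s : ℂ} (hs : ¬(s.im = 0 ∧ 0 ≤ s.re)) :
    s ≠ 0 := by
  rintro rfl
  exact hs ⟨rfl, le_rfl⟩

theorem stmt14_general (σ11 σ12 σ22 : ℝ)
    (hdet : 0 < σ11 * σ22 - σ12 ^ 2)
    (β : ℝ) (hβ : β = Real.arccos (-σ12 / Real.sqrt (σ11 * σ22)))
    (s t : ℂ) (hs : ¬(s.im = 0 ∧ 0 ≤ s.re)) (ht : ¬(t.im = 0 ∧ 0 ≤ t.re))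
    (hW : Wfun β s = Wfun β t) :
    ∃ k : ℤ, s = t * Complex.exp (2 * (k : ℂ) * (β : ℂ) * Complex.I) ∨
      s * t = Complex.exp (2 * (k : ℂ) * (β : ℂ) * Complex.I) := by
  have hβ0 : β ≠ 0 := (hβ ▸ Real.arccos_neg_div_sqrt_pos hdet).ne'
  have hs0 : -s ≠ 0 := neg_ne_zero.mpr (ne_zero_of_not_im_eq_zero_and_re_nonneg hs)
  have ht0 : -t ≠ 0 := neg_ne_zero.mpr (ne_zero_of_not_im_eq_zero_and_re_nonneg ht)
  rw [Wfun_eq_add_inv, Wfun_eq_add_inv, mul_right_inj' (by norm_num)] at hW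
  rcases eq_or_mul_eq_one_of_add_inv_eq (exp_ne_zero _) (exp_ne_zero _) hW with h | h
  · obtain ⟨k, hk⟩ := exists_int_eq_of_exp_pi_div_mul_eq_one hβ0
      (z := log (-s) - log (-t)) (by rw [mul_sub, exp_sub, h, div_self (exp_ne_zero _)])
    refine ⟨k, Or.inl ?_⟩
    have hquot := congrArg exp hk
    rw [exp_sub, exp_log hs0, exp_log ht0, neg_div_neg_eq, div_eq_iff (neg_ne_zero.mp ht0)]
      at hquot
    linear_combination hquot
  · obtain ⟨k, hk⟩ := exists_int_eq_of_exp_pi_div_mul_eq_one hβ0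
      (z := log (-s) + log (-t)) (by rw [mul_add, exp_add, h])
    refine ⟨k, Or.inr ?_⟩
    have hprod := congrArg exp hk
    rw [exp_add, exp_log hs0, exp_log ht0] at hprod
    linear_combination hprod

/-- If `W(s) = W(t)` for `s, t ∈ ℂ ∖ [0, ∞)`, then `s = t·e^{2ikβ}` or
`s·t = e^{2ikβ}` for some integer `k`. -/
theorem stmt14 (σ11 σ12 σ22 : ℝ)
    (h11 : 0 < σ11) (h22 : 0 < σ22) (hdet : 0 < σ11 * σ22 - σ12 ^ 2)
    (β : ℝ) (hβ : β = Real.arccos (-σ12 / Real.sqrt (σ11 * σ22)))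
    (s t : ℂ) (hs : ¬(s.im = 0 ∧ 0 ≤ s.re)) (ht : ¬(t.im = 0 ∧ 0 ≤ t.re))
    (hW : Wfun β s = Wfun β t) :
    ∃ k : ℤ, s = t * Complex.exp (2 * (k : ℂ) * (β : ℂ) * Complex.I) ∨
      s * t = Complex.exp (2 * (k : ℂ) * (β : ℂ) * Complex.I) :=
  stmt14_general σ11 σ12 σ22 hdet β hβ s t hs ht hW
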